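/- Let the heads be initialized i.i.d. across i ∈ [m/2] with c_i^{(0)} uniform on {−1,+1}, U_i^{(0)} ∼ N(0, I_d), W_i^{(0)} with i.i.d. N(0,1) entries, and symmetric pairing (c^{(0)}_{i+m/2}, U^{(0)}_{i+m/2}, W^{(0)}_{i+m/2}) = (−c_i^{(0)}, U_i^{(0)}, W_i^{(0)}). For the shallow Transformer f(X;φ) = m^{-1/2} ∑_{i=1}^m c_i σ(U_i^⊤ a(X;W_i)) with σ bounded with bounded derivative, for any fixed inputs X, X' ∈ 𝒳, almost surely as m → ∞ (over even m), ⟨∇_φ f(X;φ^{(0)}), ∇_φ f(X';φ^{(0)})⟩ converges to K(X,X') = K_c(X,X') + K_u(X,X') + K_w(X,X'), where, with (c,U,W) a single draw of the initialization, a = a(X;W), a' = a(X';W), M = X J_s(X^⊤ W q_X) X^⊤, M' = X' J_s(X'^⊤ W q_{X'}) X'^⊤: K_c(X,X') = E[σ(U^⊤a) σ(U^⊤a')], K_u(X,X') = E[σ'(U^⊤a) σ'(U^⊤a') ⟨a,a'⟩], and K_w(X,X') = ⟨q_X, q_{X'}⟩ E[σ'(U^⊤a) σ'(U^⊤a') U^⊤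 M M' U]. -/

import Mathlib

open scoped BigOperators

noncomputable section

/-- The softmax map `(σ_s(z))_t = exp(z_t) / ∑_s exp(z_s)`. -/
def softmax {T : ℕ} (z : Fin T → ℝ) : Fin T → ℝ :=
  fun t => Real.exp (z t) / ∑ s, Real.exp (z s)

/-- Euclidean (ℓ²) norm of a finitely indexed real vector. -/
def l2 {ι : Type*} [Fintype ι] (v : ι → ℝ) : ℝ := Real.sqrt (∑ i, v i ^ 2)

/-- ℓ¹ norm. -/
def l1 {ι : Type*} [Fintype ι] (v : ι → ℝ) : ℝ := ∑ i, |v i|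

/-- ℓ^∞ norm. -/
def linf {ι : Type*} [Fintype ι] (v : ι → ℝ) : ℝ := ⨆ i, |v i|

/-- Frobenius norm of a matrix given as a function. -/
def frob {ι κ : Type*} [Fintype ι] [Fintype κ] (A : ι → κ → ℝ) : ℝ :=
  Real.sqrt (∑ i, ∑ j, A i j ^ 2)

/-- Euclidean inner product. -/
def dot {ι : Type*} [Fintype ι] (u v : ι → ℝ) : ℝ := ∑ i, u i * v i

/-- Frobenius inner product. -/
def frobDot {ι κ : Type*} [Fintype ι] [Fintype κ] (A B : ι → κ → ℝ) : ℝ :=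
  ∑ i, ∑ j, A i j * B i j

/-- Jacobian matrix of softmax: `J_s(z) = diag(σ_s(z)) − σ_s(z) σ_s(z)ᵀ`. -/
def softmaxJac {T : ℕ} (z : Fin T → ℝ) : Fin T → Fin T → ℝ :=
  fun s t => (if s = t then softmax z s else 0) - softmax z s * softmax z t

/-- Attention scores `X ᵀ W q ∈ ℝ^T`. -/
def score {d T : ℕ} (X : Fin d → Fin T → ℝ) (W : Fin d → Fin d → ℝ) (q : Fin d → ℝ) :
    Fin T → ℝ :=
  fun t => ∑ i, X i t * (∑ j, W i j * q j)

/-- Attention output `a(X;W) = X σ_s(Xᵀ W q)`. -/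
def attn {d T : ℕ} (X : Fin d → Fin T → ℝ) (W : Fin d → Fin d → ℝ) (q : Fin d → ℝ) :
    Fin d → ℝ :=
  fun i => ∑ t, X i t * softmax (score X W q) t

/-- The matrix `M(X;W) = X J_s(Xᵀ W q) Xᵀ`. -/
def Mmat {d T : ℕ} (X : Fin d → Fin T → ℝ) (W : Fin d → Fin d → ℝ) (q : Fin d → ℝ) :
    Fin d → Fin d → ℝ :=
  fun i j => ∑ s, ∑ t, X i s * softmaxJac (score X W q) s t * X j t

open MeasureTheory ProbabilityTheory Filter
open scoped ENNReal Topology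

/-- The type of the parameters (c, U, W) of a single head. -/
abbrev HeadParams (d : ℕ) := ℝ × (Fin d → ℝ) × (Fin d → Fin d → ℝ)

/-- Law of the random initialization of a single head: `c ~ Unif{−1,1}`,
`U ~ N(0, I_d)`, `W` with i.i.d. `N(0,1)` entries, independent. -/
def headInitLaw (d : ℕ) : Measure (HeadParams d) :=
  ((2⁻¹ : ℝ≥0∞) • Measure.dirac (-1 : ℝ) + (2⁻¹ : ℝ≥0∞) • Measure.dirac (1 : ℝ)).prod
    ((Measure.pi fun _ : Fin d => gaussianReal 0 1).prod
      (Measure.pi fun _ : Fin d => Measure.pi fun _ : Fin d => gaussianReal 0 1))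

/-- Symmetric extension of the first-half `c`'s: head `i+K` carries `−c_i`. -/
def mirrorC {K : ℕ} (z : Fin K → ℝ) : Fin (2 * K) → ℝ := fun i =>
  if h : (i : ℕ) < K then z ⟨i, h⟩ else -z ⟨(i : ℕ) - K, by have := i.isLt; omega⟩

/-- Symmetric extension of the first-half `U`'s (or `W`'s): head `i+K` copies head `i`. -/
def mirror {K : ℕ} {α : Type*} (z : Fin K → α) : Fin (2 * K) → α := fun i =>
  if h : (i : ℕ) < K then z ⟨i, h⟩ else z ⟨(i : ℕ) - K, by have := i.isLt; omega⟩

/-- `σ(Uᵀ a(X;W))` for a single head parameter triple. -/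
def phiC {d T : ℕ} (σf : ℝ → ℝ) (X : Fin d → Fin T → ℝ) (q : Fin d → ℝ)
    (φ : HeadParams d) : ℝ :=
  σf (dot φ.2.1 (attn X φ.2.2 q))

/-- `σ'(Uᵀ a(X;W))` for a single head parameter triple. -/
def phiDer {d T : ℕ} (σf : ℝ → ℝ) (X : Fin d → Fin T → ℝ) (q : Fin d → ℝ)
    (φ : HeadParams d) : ℝ :=
  deriv σf (dot φ.2.1 (attn X φ.2.2 q))

/-- `M(X;W) U` for a single head parameter triple. -/
def mU {d T : ℕ} (X : Fin d → Fin T → ℝ) (q : Fin d → ℝ) (φ : HeadParams d) :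
    Fin d → ℝ :=
  fun k => ∑ j, Mmat X φ.2.2 q k j * φ.2.1 j

/-- Contribution of one head (with parameters φ = (c,U,W)) to
`m ⋅ ⟨∇_φ f(X;φ⁽⁰⁾), ∇_φ f(X';φ⁽⁰⁾)⟩`, computed from the gradient formulas: the
`c`-block, the `U`-block, and the `W`-block. -/
def headGradDot {d T : ℕ} (σf : ℝ → ℝ) (X : Fin d → Fin T → ℝ) (q : Fin d → ℝ)
    (X' : Fin d → Fin T → ℝ) (q' : Fin d → ℝ) (φ : HeadParams d) : ℝ :=
  phiC σf X q φ * phiC σf X' q' φ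
  + φ.1 ^ 2 * phiDer σf X q φ * phiDer σf X' q' φ * dot (attn X φ.2.2 q) (attn X' φ.2.2 q')
  + φ.1 ^ 2 * phiDer σf X q φ * phiDer σf X' q' φ * dot q q' * dot (mU X q φ) (mU X' q' φ)


/-! ### Auxiliary lemmas -/

section NTKAux

open Finset

variable {d T : ℕ}

lemma softmax_nonneg {z : Fin T → ℝ} (t : Fin T) : 0 ≤ softmax z t := by
  have h : (0:ℝ) < ∑ s, Real.exp (z s) :=
    Finset.sum_pos (fun s _ => Real.exp_pos _) ⟨t, Finset.mem_univ t⟩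
  exact div_nonneg (Real.exp_pos _).le h.le

lemma softmax_le_one {z : Fin T → ℝ} (t : Fin T) : softmax z t ≤ 1 := by
  have h : (0:ℝ) < ∑ s, Real.exp (z s) :=
    Finset.sum_pos (fun s _ => Real.exp_pos _) ⟨t, Finset.mem_univ t⟩
  rw [softmax, div_le_one h]
  exact Finset.single_le_sum (fun s _ => (Real.exp_pos (z s)).le) (Finset.mem_univ t)

lemma abs_softmaxJac_le {z : Fin T → ℝ} (s t : Fin T) : |softmaxJac z s t| ≤ 1 := by
  have h1 := softmax_nonneg (z := z) s
  have h2 := softmax_le_one (z := z) s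
  have h3 := softmax_nonneg (z := z) t
  have h4 := softmax_le_one (z := z) t
  rw [softmaxJac, abs_le]
  constructor <;> split_ifs <;> nlinarith

lemma entry_abs_le {v : Fin d → ℝ} (hv : l2 v ≤ 1) (i : Fin d) : |v i| ≤ 1 := by
  unfold l2 at hv
  have hS : (0:ℝ) ≤ ∑ j, v j ^ 2 := Finset.sum_nonneg fun j _ => sq_nonneg _
  have h1 : ∑ j, v j ^ 2 ≤ 1 := by
    nlinarith [Real.sq_sqrt hS, Real.sqrt_nonneg (∑ j, v j ^ 2)]
  have h2 : v i ^ 2 ≤ 1 :=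
    le_trans (Finset.single_le_sum (fun j _ => sq_nonneg (v j)) (Finset.mem_univ i)) h1
  rw [abs_le]; constructor <;> nlinarith

lemma abs_attn_le {X : Fin d → Fin T → ℝ} (hX : ∀ t, l2 (fun k => X k t) ≤ 1)
    (W : Fin d → Fin d → ℝ) (q : Fin d → ℝ) (i : Fin d) : |attn X W q i| ≤ (T : ℝ) := by
  calc |attn X W q i| ≤ ∑ t, |X i t * softmax (score X W q) t| :=
        Finset.abs_sum_le_sum_abs _ _
    _ ≤ ∑ _t : Fin T, 1 := by
        apply Finset.sum_le_sum
        intro t _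
        rw [abs_mul]
        have h1 : |X i t| ≤ 1 := entry_abs_le (hX t) i
        have h2 : |softmax (score X W q) t| ≤ 1 := by
          rw [abs_of_nonneg (softmax_nonneg t)]; exact softmax_le_one t
        nlinarith [abs_nonneg (X i t), abs_nonneg (softmax (score X W q) t)]
    _ = (T : ℝ) := by simp

lemma abs_dot_le {u v : Fin d → ℝ} {A B : ℝ} (hu : ∀ i, |u i| ≤ A) (hv : ∀ i, |v i| ≤ B) :
    |dot u v| ≤ (d : ℝ) * (A * B) := by
  calc |dot u v| ≤ ∑ i, |u i * v i| := Finset.abs_sum_le_sum_abs _ _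
    _ ≤ ∑ _i : Fin d, A * B := by
        apply Finset.sum_le_sum
        intro i _
        rw [abs_mul]
        exact mul_le_mul (hu i) (hv i) (abs_nonneg _) (le_trans (abs_nonneg _) (hu i))
    _ = (d : ℝ) * (A * B) := by simp [mul_comm]

lemma abs_Mmat_le {X : Fin d → Fin T → ℝ} (hX : ∀ t, l2 (fun k => X k t) ≤ 1)
    (W : Fin d → Fin d → ℝ) (q : Fin d → ℝ) (i j : Fin d) :
    |Mmat X W q i j| ≤ (T : ℝ)^2 := by
  calc |Mmat X W q i j| ≤ ∑ s, |∑ t, X i s * softmaxJac (score X W q) s t * X j t| :=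
        Finset.abs_sum_le_sum_abs _ _
    _ ≤ ∑ s : Fin T, ∑ t : Fin T, |X i s * softmaxJac (score X W q) s t * X j t| :=
        Finset.sum_le_sum fun s _ => Finset.abs_sum_le_sum_abs _ _
    _ ≤ ∑ _s : Fin T, ∑ _t : Fin T, 1 := by
        apply Finset.sum_le_sum; intro s _
        apply Finset.sum_le_sum; intro t _
        rw [abs_mul, abs_mul]
        have h1 : |X i s| ≤ 1 := entry_abs_le (hX s) i
        have h2 : |X j t| ≤ 1 := entry_abs_le (hX t) j
        have h3 := abs_softmaxJac_le (z := score X W q) s t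
        have := abs_nonneg (X i s)
        have := abs_nonneg (X j t)
        have := abs_nonneg (softmaxJac (score X W q) s t)
        calc |X i s| * |softmaxJac (score X W q) s t| * |X j t|
            ≤ 1 * 1 * 1 := by
              apply mul_le_mul _ h2 (abs_nonneg _) (by norm_num)
              exact mul_le_mul h1 h3 (abs_nonneg _) (by norm_num)
          _ = 1 := by norm_num
    _ = (T : ℝ)^2 := by simp [sq]

lemma abs_mU_le {X : Fin d → Fin T → ℝ} (hX : ∀ t, l2 (fun k => X k t) ≤ 1)
    (q : Fin d → ℝ) (φ : HeadParams d) (k : Fin d) :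
    |mU X q φ k| ≤ (T : ℝ)^2 * ∑ j, |φ.2.1 j| := by
  calc |mU X q φ k| ≤ ∑ j, |Mmat X φ.2.2 q k j * φ.2.1 j| := Finset.abs_sum_le_sum_abs _ _
    _ ≤ ∑ j, (T : ℝ)^2 * |φ.2.1 j| := by
        apply Finset.sum_le_sum
        intro j _
        rw [abs_mul]
        exact mul_le_mul_of_nonneg_right (abs_Mmat_le hX _ q k j) (abs_nonneg _)
    _ = (T : ℝ)^2 * ∑ j, |φ.2.1 j| := by rw [Finset.mul_sum]

lemma sq_l1_le {φ : HeadParams d} :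
    (∑ j, |φ.2.1 j|)^2 ≤ (d : ℝ) * ∑ j, (φ.2.1 j)^2 := by
  have h := sq_sum_le_card_mul_sum_sq (s := Finset.univ) (f := fun j : Fin d => |φ.2.1 j|)
  simpa [sq_abs] using h

lemma measurable_softmax_comp (X : Fin d → Fin T → ℝ) (q : Fin d → ℝ) (t : Fin T) :
    Measurable fun W : Fin d → Fin d → ℝ => softmax (score X W q) t := by
  unfold softmax score
  fun_prop

lemma measurable_attn (X : Fin d → Fin T → ℝ) (q : Fin d → ℝ) (i : Fin d) :
    Measurable fun W : Fin d → Fin d → ℝ => attn X W q i := by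
  unfold attn softmax score
  fun_prop

lemma measurable_Mmat (X : Fin d → Fin T → ℝ) (q : Fin d → ℝ) (i j : Fin d) :
    Measurable fun W : Fin d → Fin d → ℝ => Mmat X W q i j := by
  unfold Mmat
  apply Finset.measurable_sum
  intro s _
  apply Finset.measurable_sum
  intro t _
  apply Measurable.mul_const
  apply Measurable.const_mul
  unfold softmaxJac
  apply Measurable.sub
  · split_ifs
    · exact measurable_softmax_comp X q s
    · exact measurable_const
  · exact (measurable_softmax_comp X q s).mul (measurable_softmax_comp X q t)

lemma measurable_dot_attn (X : Fin d → Fin T → ℝ) (q : Fin d → ℝ) :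
    Measurable fun φ : HeadParams d => dot φ.2.1 (attn X φ.2.2 q) := by
  unfold dot
  apply Finset.measurable_sum
  intro i _
  exact ((measurable_pi_apply i).comp (measurable_fst.comp measurable_snd)).mul
    ((measurable_attn X q i).comp (measurable_snd.comp measurable_snd))

lemma measurable_mU (X : Fin d → Fin T → ℝ) (q : Fin d → ℝ) (k : Fin d) :
    Measurable fun φ : HeadParams d => mU X q φ k := by
  unfold mU
  apply Finset.measurable_sum
  intro j _
  exact ((measurable_Mmat X q k j).comp (measurable_snd.comp measurable_snd)).mul
    ((measurable_pi_apply j).comp (measurable_fst.comp measurable_snd))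

instance instProbRademacher : IsProbabilityMeasure
    ((2⁻¹ : ℝ≥0∞) • Measure.dirac (-1 : ℝ) + (2⁻¹ : ℝ≥0∞) • Measure.dirac (1 : ℝ)) := by
  constructor
  simp [ENNReal.inv_two_add_inv_two]

instance instProbHeadInitLaw (d : ℕ) : IsProbabilityMeasure (headInitLaw d) := by
  unfold headInitLaw; infer_instance

lemma ae_c_sq (d : ℕ) : ∀ᵐ φ : HeadParams d ∂headInitLaw d, φ.1 ^ 2 = 1 := by
  rw [ae_iff]
  have hset : {φ : HeadParams d | ¬ φ.1 ^ 2 = 1}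
      = {c : ℝ | ¬ c ^ 2 = 1} ×ˢ (Set.univ : Set ((Fin d → ℝ) × (Fin d → Fin d → ℝ))) := by
    ext φ; simp [Set.mem_prod]
  have hmeas : MeasurableSet {c : ℝ | ¬ c ^ 2 = 1} :=
    ((measurableSet_eq_fun (by fun_prop) measurable_const)).compl
  unfold headInitLaw
  rw [hset, Measure.prod_prod]
  have h0 : ((2⁻¹ : ℝ≥0∞) • Measure.dirac (-1 : ℝ) + (2⁻¹ : ℝ≥0∞) • Measure.dirac (1 : ℝ))
      {c : ℝ | ¬ c ^ 2 = 1} = 0 := by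
    rw [Measure.add_apply, Measure.smul_apply, Measure.smul_apply,
      Measure.dirac_apply' _ hmeas, Measure.dirac_apply' _ hmeas]
    norm_num [Set.indicator]
  rw [h0, zero_mul]

lemma map_projU (d : ℕ) :
    Measure.map (fun φ : HeadParams d => φ.2.1) (headInitLaw d)
      = Measure.pi (fun _ : Fin d => gaussianReal 0 1) := by
  unfold headInitLaw
  have h : (fun φ : HeadParams d => φ.2.1)
      = (Prod.fst ∘ Prod.snd : HeadParams d → Fin d → ℝ) := rfl
  rw [h, ← Measure.map_map measurable_fst measurable_snd,
    Measure.map_snd_prod, measure_univ, one_smul,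
    Measure.map_fst_prod, measure_univ, one_smul]

lemma sq_mul_exp_le (x : ℝ) :
    x ^ 2 * Real.exp (-(x - 0) ^ 2 / (2 * 1)) ≤ 4 * Real.exp (-(1/4) * x ^ 2) := by
  have h1 : x ^ 2 ≤ 4 * Real.exp (x ^ 2 / 4) := by
    nlinarith [Real.add_one_le_exp (x ^ 2 / 4)]
  have h3 : x ^ 2 * Real.exp (-(1/4) * x ^ 2) ≤ 4 := by
    calc x ^ 2 * Real.exp (-(1/4) * x ^ 2)
        ≤ (4 * Real.exp (x ^ 2 / 4)) * Real.exp (-(1/4) * x ^ 2) :=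
          mul_le_mul_of_nonneg_right h1 (Real.exp_pos _).le
      _ = 4 * Real.exp (x ^ 2 / 4 + -(1/4) * x ^ 2) := by rw [mul_assoc, ← Real.exp_add]
      _ = 4 := by
          have h0 : x ^ 2 / 4 + -(1/4) * x ^ 2 = 0 := by ring
          rw [h0, Real.exp_zero, mul_one]
  have h4 : Real.exp (-(x - 0) ^ 2 / (2 * 1))
      = Real.exp (-(1/4) * x ^ 2) * Real.exp (-(1/4) * x ^ 2) := by
    rw [← Real.exp_add]
    congr 1
    ring
  rw [h4, ← mul_assoc]
  exact mul_le_mul_of_nonneg_right h3 (Real.exp_pos _).le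

lemma integrable_sq_gaussianReal : Integrable (fun x : ℝ => x ^ 2) (gaussianReal 0 1) := by
  rw [gaussianReal_of_var_ne_zero 0 one_ne_zero]
  rw [integrable_withDensity_iff (measurable_gaussianPDF 0 1)
    (ae_of_all _ fun x => ENNReal.ofReal_lt_top)]
  have heq : (fun x : ℝ => x ^ 2 * ((gaussianPDF 0 1 x).toReal))
      = fun x : ℝ => (Real.sqrt (2 * Real.pi * 1))⁻¹ *
          (x ^ 2 * Real.exp (-(x - 0) ^ 2 / (2 * 1))) := by
    funext x
    rw [gaussianPDF, ENNReal.toReal_ofReal (gaussianPDFReal_nonneg 0 1 x), gaussianPDFReal]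
    push_cast
    ring
  rw [heq]
  apply Integrable.const_mul
  have hInt : Integrable (fun x : ℝ => 4 * Real.exp (-(1/4) * x ^ 2)) :=
    (integrable_exp_neg_mul_sq (by norm_num : (0:ℝ) < 1/4)).const_mul 4
  apply hInt.mono'
  · apply Measurable.aestronglyMeasurable
    fun_prop
  · refine ae_of_all _ fun x => ?_
    rw [Real.norm_eq_abs, abs_of_nonneg (by positivity)]
    exact sq_mul_exp_le x

lemma map_eval_pi_gaussian {d : ℕ} (j : Fin d) :
    Measure.map (fun u : Fin d → ℝ => u j) (Measure.pi fun _ : Fin d => gaussianReal 0 1)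
      = gaussianReal 0 1 := by
  ext s hs
  rw [Measure.map_apply (measurable_pi_apply j) hs]
  have hpre : (fun u : Fin d → ℝ => u j) ⁻¹' s
      = Set.pi Set.univ (Function.update (fun _ : Fin d => (Set.univ : Set ℝ)) j s) :=
    Set.eval_preimage
  rw [hpre, Measure.pi_pi]
  rw [Finset.prod_eq_single j]
  · simp
  · intro i _ hij
    simp [Function.update_of_ne hij]
  · intro h; exact absurd (Finset.mem_univ j) h

lemma sum_mirror {d K : ℕ} (f : HeadParams d → ℝ)
    (hf : ∀ c u w, f (-c, u, w) = f (c, u, w))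
    (zc : Fin K → ℝ) (zu : Fin K → Fin d → ℝ) (zw : Fin K → Fin d → Fin d → ℝ) :
    (∑ i : Fin (2 * K), f (mirrorC zc i, mirror zu i, mirror zw i))
      = 2 * ∑ i : Fin K, f (zc i, zu i, zw i) := by
  let e : Fin (K + K) ≃ Fin (2 * K) := finCongr (two_mul K).symm
  rw [← e.sum_comp]
  rw [Fin.sum_univ_add]
  have h1 : ∀ i : Fin K,
      f (mirrorC zc (e (Fin.castAdd K i)), mirror zu (e (Fin.castAdd K i)),
        mirror zw (e (Fin.castAdd K i))) = f (zc i, zu i, zw i) := by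
    intro i
    have hv : ((e (Fin.castAdd K i) : Fin (2 * K)) : ℕ) = (i : ℕ) := by
      simp [e, finCongr]
    simp only [mirrorC, mirror, hv, i.isLt, dif_pos, Fin.eta]
  have h2 : ∀ i : Fin K,
      f (mirrorC zc (e (Fin.natAdd K i)), mirror zu (e (Fin.natAdd K i)),
        mirror zw (e (Fin.natAdd K i))) = f (zc i, zu i, zw i) := by
    intro i
    have hv : ((e (Fin.natAdd K i) : Fin (2 * K)) : ℕ) = K + (i : ℕ) := by
      simp [e, finCongr]
      omega
    have hlt : ¬ (K + (i : ℕ) < K) := by omega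
    have hsub : K + (i : ℕ) - K = (i : ℕ) := by omega
    simp only [mirrorC, mirror, hv, hlt, dif_neg, not_false_iff, hsub, Fin.eta]
    exact hf _ _ _
  rw [Finset.sum_congr rfl fun i _ => h1 i, Finset.sum_congr rfl fun i _ => h2 i]
  ring

end NTKAux

/-- almost sure convergence of the empirical NTK
`⟨∇_φ f(X;φ⁽⁰⁾), ∇_φ f(X';φ⁽⁰⁾)⟩` of the width-`2k` symmetrically initialized shallow
Transformer, as `k → ∞`, to the deterministic kernel `K = K_c + K_u + K_w`. -/
theorem ntk_convergence {d T : ℕ}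
    {Ω : Type*} [MeasurableSpace Ω] (P : Measure Ω) [IsProbabilityMeasure P]
    (σf : ℝ → ℝ) (σ₀ σ₁ : ℝ) (hdiff : Differentiable ℝ σf)
    (hσ0 : ∀ x, |σf x| ≤ σ₀) (hσ1 : ∀ x, |deriv σf x| ≤ σ₁)
    (X X' : Fin d → Fin T → ℝ)
    (hX : ∀ t, l2 (fun k => X k t) ≤ 1) (hX' : ∀ t, l2 (fun k => X' k t) ≤ 1)
    (q q' : Fin d → ℝ) (hq : l2 q ≤ 1) (hq' : l2 q' ≤ 1)
    -- the i.i.d. sequence of first-half head initializations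
    (Z : ℕ → Ω → HeadParams d)
    (hlaw : ∀ i, Measure.map (Z i) P = headInitLaw d)
    (hindep : iIndepFun Z P) :
    ∀ᵐ ω ∂P,
      Tendsto (fun k : ℕ =>
          -- empirical NTK of the width-2k model at the symmetric initialization
          (1 / (2 * k : ℝ)) * ∑ i : Fin (2 * k),
            headGradDot σf X q X' q'
              ((mirrorC fun i' : Fin k => (Z i' ω).1) i,
               (mirror fun i' : Fin k => (Z i' ω).2.1) i,
               (mirror fun i' : Fin k => (Z i' ω).2.2) i))
        atTop
        (𝓝 (
          -- K_c
          (∫ ω, phiC σf X q (Z 0 ω) * phiC σf X' q' (Z 0 ω) ∂P)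
          -- K_u
          + (∫ ω, phiDer σf X q (Z 0 ω) * phiDer σf X' q' (Z 0 ω) *
                dot (attn X (Z 0 ω).2.2 q) (attn X' (Z 0 ω).2.2 q') ∂P)
          -- K_w
          + dot q q' *
              ∫ ω, phiDer σf X q (Z 0 ω) * phiDer σf X' q' (Z 0 ω) *
                dot (mU X q (Z 0 ω)) (mU X' q' (Z 0 ω)) ∂P)) := by
  classical
  have hσ0nn : 0 ≤ σ₀ := le_trans (abs_nonneg _) (hσ0 0)
  have hσ1nn : 0 ≤ σ₁ := le_trans (abs_nonneg _) (hσ1 0)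
  set g : HeadParams d → ℝ := headGradDot σf X q X' q' with hgdef
  -- measurability
  have hmPhiC : Measurable (phiC σf X q (T := T)) :=
    hdiff.continuous.measurable.comp (measurable_dot_attn X q)
  have hmPhiC' : Measurable (phiC σf X' q' (T := T)) :=
    hdiff.continuous.measurable.comp (measurable_dot_attn X' q')
  have hmPD : Measurable (phiDer σf X q (T := T)) :=
    (measurable_deriv σf).comp (measurable_dot_attn X q)
  have hmPD' : Measurable (phiDer σf X' q' (T := T)) :=
    (measurable_deriv σf).comp (measurable_dot_attn X' q')
  have hmAA : Measurable fun φ : HeadParams d =>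
      dot (attn X φ.2.2 q) (attn X' φ.2.2 q') := by
    unfold dot
    apply Finset.measurable_sum
    intro i _
    exact ((measurable_attn X q i).comp (measurable_snd.comp measurable_snd)).mul
      ((measurable_attn X' q' i).comp (measurable_snd.comp measurable_snd))
  have hmMM : Measurable fun φ : HeadParams d => dot (mU X q φ) (mU X' q' φ) := by
    unfold dot
    exact Finset.measurable_sum _ fun i _ => (measurable_mU X q i).mul (measurable_mU X' q' i)
  have hmT1 : Measurable fun φ : HeadParams d => phiC σf X q φ * phiC σf X' q' φ :=
    hmPhiC.mul hmPhiC'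
  have hmT2 : Measurable fun φ : HeadParams d =>
      phiDer σf X q φ * phiDer σf X' q' φ * dot (attn X φ.2.2 q) (attn X' φ.2.2 q') :=
    (hmPD.mul hmPD').mul hmAA
  have hmT3 : Measurable fun φ : HeadParams d =>
      phiDer σf X q φ * phiDer σf X' q' φ * dot (mU X q φ) (mU X' q' φ) :=
    (hmPD.mul hmPD').mul hmMM
  have hmG : Measurable g := by
    rw [hgdef]
    unfold headGradDot
    apply Measurable.add
    apply Measurable.add
    · exact hmT1
    · exact ((((measurable_fst.pow_const 2).mul hmPD).mul hmPD').mul hmAA)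
    · exact (((((measurable_fst.pow_const 2).mul hmPD).mul hmPD').mul_const (dot q q')).mul hmMM)
  -- a.e. measurability of the heads
  have hZae : ∀ i, AEMeasurable (Z i) P := by
    intro i
    by_contra h
    have h0 := Measure.map_of_not_aemeasurable h
    rw [hlaw i] at h0
    exact IsProbabilityMeasure.ne_zero (headInitLaw d) h0
  -- the sequence of head contributions
  set Y : ℕ → Ω → ℝ := fun i ω => g (Z i ω) with hYdef
  have hident : ∀ i, IdentDistrib (Y i) (Y 0) P P := by
    intro i
    have hZid : IdentDistrib (Z i) (Z 0) P P :=
      ⟨hZae i, hZae 0, by rw [hlaw i, hlaw 0]⟩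
    exact hZid.comp hmG
  have hpind : Pairwise (Function.onFun (IndepFun · · P) Y) := by
    intro i j hij
    exact (hindep.indepFun hij).comp hmG hmG
  -- almost surely c² = 1
  have haec : ∀ᵐ ω ∂P, ((Z 0 ω).1) ^ 2 = 1 := by
    have hs : MeasurableSet {φ : HeadParams d | φ.1 ^ 2 = 1} :=
      measurableSet_eq_fun (by fun_prop) measurable_const
    exact (ae_map_iff (hZae 0) hs).mp (by rw [hlaw 0]; exact ae_c_sq d)
  -- integrability of the three pieces
  have hInt1 : Integrable (fun ω => phiC σf X q (Z 0 ω) * phiC σf X' q' (Z 0 ω)) P := by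
    apply Integrable.mono' (integrable_const (σ₀ * σ₀))
    · exact (hmT1.comp_aemeasurable (hZae 0)).aestronglyMeasurable
    · refine ae_of_all _ fun ω => ?_
      rw [Real.norm_eq_abs, abs_mul]
      exact mul_le_mul (hσ0 _) (hσ0 _) (abs_nonneg _) hσ0nn
  have hInt2 : Integrable (fun ω => phiDer σf X q (Z 0 ω) * phiDer σf X' q' (Z 0 ω) *
      dot (attn X (Z 0 ω).2.2 q) (attn X' (Z 0 ω).2.2 q')) P := by
    apply Integrable.mono' (integrable_const (σ₁ * σ₁ * ((d:ℝ) * ((T:ℝ) * (T:ℝ)))))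
    · exact (hmT2.comp_aemeasurable (hZae 0)).aestronglyMeasurable
    · refine ae_of_all _ fun ω => ?_
      rw [Real.norm_eq_abs, abs_mul]
      apply mul_le_mul _ (abs_dot_le (abs_attn_le hX _ q) (abs_attn_le hX' _ q'))
        (abs_nonneg _) (by positivity)
      rw [abs_mul]
      exact mul_le_mul (hσ1 _) (hσ1 _) (abs_nonneg _) hσ1nn
  have hIntU2 : Integrable (fun ω => ∑ j, ((Z 0 ω).2.1 j)^2) P := by
    apply integrable_finset_sum
    intro j _
    have hmeasf : Measurable fun φ : HeadParams d => (φ.2.1 j)^2 := by fun_prop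
    have h2 : Integrable (fun u : Fin d → ℝ => (u j)^2)
        (Measure.pi fun _ : Fin d => gaussianReal 0 1) := by
      have h3 : Integrable (fun x : ℝ => x^2)
          (Measure.map (fun u : Fin d → ℝ => u j)
            (Measure.pi fun _ : Fin d => gaussianReal 0 1)) := by
        rw [map_eval_pi_gaussian j]; exact integrable_sq_gaussianReal
      exact (integrable_map_measure
        (by fun_prop : Measurable fun x : ℝ => x^2).aestronglyMeasurable
        (measurable_pi_apply j).aemeasurable).mp h3
    have h4 : Integrable (fun φ : HeadParams d => (φ.2.1 j)^2) (headInitLaw d) := by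
      have h5 : Integrable (fun u : Fin d → ℝ => (u j)^2)
          (Measure.map (fun φ : HeadParams d => φ.2.1) (headInitLaw d)) := by
        rw [map_projU d]; exact h2
      exact (integrable_map_measure
        (by fun_prop : Measurable fun u : Fin d → ℝ => (u j)^2).aestronglyMeasurable
        (measurable_fst.comp measurable_snd).aemeasurable).mp h5
    have h6 : Integrable (fun φ : HeadParams d => (φ.2.1 j)^2) (Measure.map (Z 0) P) := by
      rw [hlaw 0]; exact h4
    exact (integrable_map_measure hmeasf.aestronglyMeasurable (hZae 0)).mp h6
  have hInt3 : Integrable (fun ω => phiDer σf X q (Z 0 ω) * phiDer σf X' q' (Z 0 ω) *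
      dot (mU X q (Z 0 ω)) (mU X' q' (Z 0 ω))) P := by
    apply Integrable.mono'
      ((hIntU2.const_mul (σ₁ * σ₁ * ((d:ℝ) * ((T:ℝ)^2 * (T:ℝ)^2 * (d:ℝ)))) ))
    · exact (hmT3.comp_aemeasurable (hZae 0)).aestronglyMeasurable
    · refine ae_of_all _ fun ω => ?_
      set φ : HeadParams d := Z 0 ω with hφ
      have hsnn : (0:ℝ) ≤ ∑ j, |φ.2.1 j| := Finset.sum_nonneg fun j _ => abs_nonneg _
      have hMM : |dot (mU X q φ) (mU X' q' φ)|
          ≤ (d:ℝ) * (((T:ℝ)^2 * ∑ j, |φ.2.1 j|) * ((T:ℝ)^2 * ∑ j, |φ.2.1 j|)) :=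
        abs_dot_le (abs_mU_le hX q φ) (abs_mU_le hX' q' φ)
      have hMM2 : |dot (mU X q φ) (mU X' q' φ)|
          ≤ (d:ℝ) * ((T:ℝ)^2 * (T:ℝ)^2 * ((d:ℝ) * ∑ j, (φ.2.1 j)^2)) := by
        refine le_trans hMM ?_
        have h7 : ((T:ℝ)^2 * ∑ j, |φ.2.1 j|) * ((T:ℝ)^2 * ∑ j, |φ.2.1 j|)
            = (T:ℝ)^2 * (T:ℝ)^2 * (∑ j, |φ.2.1 j|)^2 := by ring
        rw [h7]
        apply mul_le_mul_of_nonneg_left _ (by positivity)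
        exact mul_le_mul_of_nonneg_left sq_l1_le (by positivity)
      rw [Real.norm_eq_abs, abs_mul]
      calc |phiDer σf X q φ * phiDer σf X' q' φ| * |dot (mU X q φ) (mU X' q' φ)|
          ≤ (σ₁ * σ₁) * ((d:ℝ) * ((T:ℝ)^2 * (T:ℝ)^2 * ((d:ℝ) * ∑ j, (φ.2.1 j)^2))) := by
            apply mul_le_mul _ hMM2 (abs_nonneg _) (by positivity)
            rw [abs_mul]
            exact mul_le_mul (hσ1 _) (hσ1 _) (abs_nonneg _) hσ1nn
        _ = σ₁ * σ₁ * ((d:ℝ) * ((T:ℝ)^2 * (T:ℝ)^2 * (d:ℝ))) * ∑ j, (φ.2.1 j)^2 := by ring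
  -- Y 0 is a.e. equal to the sum of the three pieces
  have haeY : Y 0 =ᵐ[P] fun ω =>
      phiC σf X q (Z 0 ω) * phiC σf X' q' (Z 0 ω)
      + (phiDer σf X q (Z 0 ω) * phiDer σf X' q' (Z 0 ω) *
          dot (attn X (Z 0 ω).2.2 q) (attn X' (Z 0 ω).2.2 q')
        + dot q q' * (phiDer σf X q (Z 0 ω) * phiDer σf X' q' (Z 0 ω) *
            dot (mU X q (Z 0 ω)) (mU X' q' (Z 0 ω)))) := by
    filter_upwards [haec] with ω h
    simp only [hYdef, hgdef, headGradDot, h, one_mul]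
    ring
  have hInt3' : Integrable (fun ω => dot q q' * (phiDer σf X q (Z 0 ω) * phiDer σf X' q' (Z 0 ω) *
      dot (mU X q (Z 0 ω)) (mU X' q' (Z 0 ω)))) P := hInt3.const_mul _
  have hInt23 : Integrable (fun ω => phiDer σf X q (Z 0 ω) * phiDer σf X' q' (Z 0 ω) *
      dot (attn X (Z 0 ω).2.2 q) (attn X' (Z 0 ω).2.2 q')
      + dot q q' * (phiDer σf X q (Z 0 ω) * phiDer σf X' q' (Z 0 ω) *
          dot (mU X q (Z 0 ω)) (mU X' q' (Z 0 ω)))) P := hInt2.add hInt3'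
  have hIntY : Integrable (Y 0) P := ((hInt1.add hInt23).congr haeY.symm)
  -- expectation identity
  have hEq : (∫ ω, Y 0 ω ∂P) =
      (∫ ω, phiC σf X q (Z 0 ω) * phiC σf X' q' (Z 0 ω) ∂P)
      + (∫ ω, phiDer σf X q (Z 0 ω) * phiDer σf X' q' (Z 0 ω) *
            dot (attn X (Z 0 ω).2.2 q) (attn X' (Z 0 ω).2.2 q') ∂P)
      + dot q q' *
          ∫ ω, phiDer σf X q (Z 0 ω) * phiDer σf X' q' (Z 0 ω) *
            dot (mU X q (Z 0 ω)) (mU X' q' (Z 0 ω)) ∂P := by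
    rw [integral_congr_ae haeY, integral_add hInt1 hInt23,
      integral_add hInt2 hInt3', integral_const_mul]
    ring
  -- strong law of large numbers
  have hslln := strong_law_ae_real Y hIntY hpind hident
  filter_upwards [hslln] with ω hω
  have hneg : ∀ (c : ℝ) (u : Fin d → ℝ) (w : Fin d → Fin d → ℝ),
      headGradDot σf X q X' q' (-c, u, w) = headGradDot σf X q X' q' (c, u, w) := by
    intro c u w
    simp only [headGradDot, phiC, phiDer, mU, neg_sq]
    rfl
  have hfun : ∀ k : ℕ,
      (1 / (2 * k : ℝ)) * ∑ i : Fin (2 * k),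
        headGradDot σf X q X' q'
          ((mirrorC fun i' : Fin k => (Z i' ω).1) i,
           (mirror fun i' : Fin k => (Z i' ω).2.1) i,
           (mirror fun i' : Fin k => (Z i' ω).2.2) i)
      = (∑ i ∈ Finset.range k, Y i ω) / k := by
    intro k
    rw [sum_mirror (headGradDot σf X q X' q') hneg
      (fun i' : Fin k => (Z i' ω).1) (fun i' : Fin k => (Z i' ω).2.1)
      (fun i' : Fin k => (Z i' ω).2.2)]
    have hsum : (∑ i : Fin k, headGradDot σf X q X' q'
        ((Z i ω).1, (Z i ω).2.1, (Z i ω).2.2)) = ∑ i ∈ Finset.range k, Y i ω := by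
      rw [← Fin.sum_univ_eq_sum_range (fun n => Y n ω) k]
    rw [hsum]
    rcases Nat.eq_zero_or_pos k with rfl | hk
    · simp
    · have hk' : (k : ℝ) ≠ 0 := Nat.cast_ne_zero.mpr hk.ne'
      field_simp
  rw [← hEq]
  exact Tendsto.congr (fun k => (hfun k).symm) hω
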